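/- arXiv:1912.00304 — 3 statements merged into one kernel-verified Lean document; each statement's English description precedes it below -/
import Mathlib

section
/- Let $\Omega \subset \mathbb{R}^d$ and let $J, \tilde{J} : \Omega \to \mathbb{R}$ with $\|\tilde{J}\|_{L^\infty} \le c\epsilon^2$, and let $\beta = 2/(\eta\Sigma)$, $\hat{\beta} = 2/(\eta(\Sigma + \tilde{\Sigma}))$ with constants $\Sigma > 0$ of order 1 and $|\tilde{\Sigma}| \le c\epsilon^2$ with $\epsilon^2 \le \Sigma/(2c)$. Suppose $e^{-\beta J}$ and $e^{-\hat\beta(J+\tilde J)}$ are integrable on $\Omega$, and $J$ is bounded. Define Gibbs densities $p^\infty = e^{-\beta J}/Z$ and $\hat{p}^\infty = e^{-\hat{\beta}(J + \tilde{J})}/\hat{Z}$ with $Z = \int_\Omega e^{-\beta J}$, $\hat{Z} = \int_\Omega e^{-\hat{\beta}(J+\tilde{J})}$. Then $\big\|\hat{p}^\infty / p^\infty\big\|_{L^\infty} \le 1 + O(\epsilon^2/\eta)$, i.e., there exists a constant $C$ (depending on $c$, $\Sigma$, and $\|J\|_{L^\infty}$) such that $\|\hat{p}^\infty/p^\infty\|_{L^\infty}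 \le 1 + C\epsilon^2/\eta$ for all sufficiently small $\epsilon^2/\eta$. -/
open MeasureTheory Real

lemma exp_le_one_add_two_mul {s : ℝ} (h0 : 0 ≤ s) (h : s ≤ 1/2) :
    Real.exp s ≤ 1 + 2 * s := by
  have h1 : 1 - s ≤ Real.exp (-s) := by linarith [Real.add_one_le_exp (-s)]
  have h2 : Real.exp s * Real.exp (-s) = 1 := by
    rw [← Real.exp_add]; simp
  nlinarith [Real.exp_pos s, Real.exp_pos (-s)]

/-- Theorem 2: the ratio of the perturbed Gibbs steady state to the unperturbed one is
bounded by `1 + C ε²/η` for `ε²/η` sufficiently small. -/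
theorem stmt7 {d : ℕ} (O : Set (EuclideanSpace ℝ (Fin d)))
    (J : EuclideanSpace ℝ (Fin d) → ℝ) (MJ : ℝ) (hJb : ∀ x, |J x| ≤ MJ)
    (c Sig : ℝ) (hc : 0 < c) (hSig : 0 < Sig)
    (tJ : ℝ → EuclideanSpace ℝ (Fin d) → ℝ) (tSig : ℝ → ℝ)
    (htJ : ∀ ε > (0:ℝ), ∀ x, |tJ ε x| ≤ c * ε ^ 2)
    (htSig : ∀ ε > (0:ℝ), |tSig ε| ≤ c * ε ^ 2)
    (hint : ∀ ε > (0:ℝ), ∀ η > (0:ℝ),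
      IntegrableOn (fun x => Real.exp (-(2 / (η * Sig)) * J x)) O volume ∧
      IntegrableOn (fun x => Real.exp (-(2 / (η * (Sig + tSig ε))) * (J x + tJ ε x))) O volume) :
    ∃ C > (0:ℝ), ∃ δ > (0:ℝ), ∀ ε > (0:ℝ), ∀ η > (0:ℝ),
      ε ^ 2 ≤ Sig / (2 * c) → ε ^ 2 / η ≤ δ →
      ∀ x ∈ O,
        (Real.exp (-(2 / (η * (Sig + tSig ε))) * (J x + tJ ε x)) /
            ∫ y in O, Real.exp (-(2 / (η * (Sig + tSig ε))) * (J y + tJ ε y))) /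
          (Real.exp (-(2 / (η * Sig)) * J x) /
            ∫ y in O, Real.exp (-(2 / (η * Sig)) * J y))
        ≤ 1 + C * (ε ^ 2 / η) := by
  have hMJ : 0 ≤ MJ := le_trans (abs_nonneg _) (hJb 0)
  have hKpos : 0 < 4 * c * (MJ + Sig) / Sig ^ 2 := by positivity
  set K : ℝ := 4 * c * (MJ + Sig) / Sig ^ 2 with hK
  clear_value K
  refine ⟨4 * K, by positivity, 1 / (4 * K), by positivity, ?_⟩
  intro ε hε η hη hε2 hδ x hx
  set t : ℝ := ε ^ 2 / η with ht
  clear_value t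
  have htpos : 0 < t := by rw [ht]; positivity
  have hcε : c * ε ^ 2 ≤ Sig / 2 := by
    have h : ε ^ 2 * (2 * c) ≤ Sig := (le_div_iff₀ (by positivity)).mp hε2
    nlinarith
  set A : ℝ := Sig + tSig ε with hA
  clear_value A
  have hA2 : Sig / 2 ≤ A := by
    have h := (abs_le.mp (htSig ε hε)).1
    rw [hA]; linarith
  have hApos : 0 < A := by linarith
  set β : ℝ := 2 / (η * Sig) with hβ
  clear_value β
  set βh : ℝ := 2 / (η * A) with hβh
  clear_value βh
  have hβhpos : 0 < βh := by rw [hβh]; positivity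
  have hane : Sig + tSig ε ≠ 0 := by rw [← hA]; exact hApos.ne'
  -- bound on |β - βh|
  have hd1 : β - βh = 2 * tSig ε / (η * Sig * A) := by
    rw [hβ, hβh, hA]
    rw [div_sub_div _ _ (by positivity : η * Sig ≠ 0) (by rw [hA] at hApos; positivity)]
    rw [div_eq_div_iff (by rw [hA] at hApos; positivity) (by rw [hA] at hApos; positivity)]
    ring
  have habs1 : |β - βh| ≤ 4 * c * ε ^ 2 / (Sig ^ 2 * η) := by
    rw [hd1, abs_div, abs_of_pos (show (0:ℝ) < η * Sig * A by positivity), abs_mul, abs_two]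
    have hnum : 2 * |tSig ε| ≤ 2 * (c * ε ^ 2) := by linarith [htSig ε hε]
    have hden : η * Sig * (Sig / 2) ≤ η * Sig * A :=
      mul_le_mul_of_nonneg_left hA2 (by positivity)
    calc 2 * |tSig ε| / (η * Sig * A)
        ≤ 2 * (c * ε ^ 2) / (η * Sig * (Sig / 2)) :=
          div_le_div₀ (by positivity) hnum (by positivity) hden
      _ = 4 * c * ε ^ 2 / (Sig ^ 2 * η) := by
          field_simp
          ring
  have hβhle : βh ≤ 4 / (η * Sig) := by
    have h1 : 2 / (η * A) ≤ 2 / (η * (Sig / 2)) :=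
      div_le_div_of_nonneg_left (by norm_num) (by positivity)
        (mul_le_mul_of_nonneg_left hA2 hη.le)
    rw [hβh]
    calc 2 / (η * A) ≤ 2 / (η * (Sig / 2)) := h1
      _ = 4 / (η * Sig) := by field_simp; ring
  -- pointwise exponent bound
  have hexp : ∀ y, |β * J y - βh * (J y + tJ ε y)| ≤ K * t := by
    intro y
    have heq : β * J y - βh * (J y + tJ ε y) = (β - βh) * J y - βh * tJ ε y := by ring
    rw [heq]
    have h1 : |(β - βh) * J y| ≤ 4 * c * ε ^ 2 / (Sig ^ 2 * η) * MJ := by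
      rw [abs_mul]
      exact mul_le_mul habs1 (hJb y) (abs_nonneg _) (by positivity)
    have h2 : |βh * tJ ε y| ≤ 4 / (η * Sig) * (c * ε ^ 2) := by
      rw [abs_mul, abs_of_pos hβhpos]
      exact mul_le_mul hβhle (htJ ε hε y) (abs_nonneg _) (by positivity)
    have h3 : |(β - βh) * J y - βh * tJ ε y| ≤ |(β - βh) * J y| + |βh * tJ ε y| :=
      abs_sub _ _
    have h4 : 4 * c * ε ^ 2 / (Sig ^ 2 * η) * MJ + 4 / (η * Sig) * (c * ε ^ 2) = K * t := by
      rw [hK, ht]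
      field_simp
    linarith
  -- pointwise exponential bounds
  have hub : ∀ y, Real.exp (-βh * (J y + tJ ε y)) ≤ Real.exp (K * t) * Real.exp (-β * J y) := by
    intro y
    rw [← Real.exp_add]
    apply Real.exp_le_exp.mpr
    have := (abs_le.mp (hexp y)).2
    linarith
  have hlb : ∀ y, Real.exp (-β * J y) ≤ Real.exp (K * t) * Real.exp (-βh * (J y + tJ ε y)) := by
    intro y
    rw [← Real.exp_add]
    apply Real.exp_le_exp.mpr
    have := (abs_le.mp (hexp y)).1
    linarith
  obtain ⟨hi1, hi2⟩ := hint ε hε η hη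
  rw [← hβ] at hi1
  rw [← hA, ← hβh] at hi2
  set Z : ℝ := ∫ y in O, Real.exp (-β * J y) with hZ
  clear_value Z
  set Zh : ℝ := ∫ y in O, Real.exp (-βh * (J y + tJ ε y)) with hZh
  clear_value Zh
  have hZnn : 0 ≤ Z := by
    rw [hZ]; exact integral_nonneg fun y => (Real.exp_pos _).le
  have hZhnn : 0 ≤ Zh := by
    rw [hZh]; exact integral_nonneg fun y => (Real.exp_pos _).le
  have hZle : Z ≤ Real.exp (K * t) * Zh := by
    rw [hZ, hZh, ← integral_const_mul]
    exact integral_mono hi1 (hi2.const_mul _) hlb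
  -- final bound using the exp estimate
  have hKt : 2 * (K * t) ≤ 1 / 2 := by
    have h := mul_le_mul_of_nonneg_left hδ (by positivity : (0:ℝ) ≤ 2 * K)
    calc 2 * (K * t) = 2 * K * t := by ring
      _ ≤ 2 * K * (1 / (4 * K)) := h
      _ = 1 / 2 := by field_simp; ring
  have hexp2 : Real.exp (2 * (K * t)) ≤ 1 + 4 * K * t := by
    have := exp_le_one_add_two_mul (by positivity) hKt
    calc Real.exp (2 * (K * t)) ≤ 1 + 2 * (2 * (K * t)) := this
      _ = 1 + 4 * K * t := by ring
  rcases eq_or_lt_of_le hZhnn with h0 | hZhpos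
  · rw [← h0, div_zero, zero_div]
    positivity
  rcases eq_or_lt_of_le hZnn with h0 | hZpos
  · rw [← h0, div_zero, div_zero]
    positivity
  set N : ℝ := Real.exp (-βh * (J x + tJ ε x)) with hN
  clear_value N
  set D : ℝ := Real.exp (-β * J x) with hD
  clear_value D
  have hDpos : 0 < D := by rw [hD]; exact Real.exp_pos _
  have hNpos : 0 < N := by rw [hN]; exact Real.exp_pos _
  have hsplit : N / Zh / (D / Z) = N / D * (Z / Zh) := by
    field_simp
  rw [hsplit]
  have hND : N / D ≤ Real.exp (K * t) := by
    rw [div_le_iff₀ hDpos, hN, hD]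
    exact hub x
  have hZZ : Z / Zh ≤ Real.exp (K * t) := by
    rw [div_le_iff₀ hZhpos]
    exact hZle
  calc N / D * (Z / Zh) ≤ Real.exp (K * t) * Real.exp (K * t) :=
        mul_le_mul hND hZZ (by positivity) (Real.exp_pos _).le
    _ = Real.exp (2 * (K * t)) := by rw [← Real.exp_add]; ring_nf
    _ ≤ 1 + 4 * K * t := hexp2
end

section
/- Under the assumptions of the previous statement, the ratio of normalizing constants satisfies $Z/\hat{Z} = 1 + O(\epsilon^2/\eta)$: there exists $C$ such that $|Z/\hat{Z} - 1| \le C\epsilon^2/\eta$ for $\epsilon^2/\eta$ sufficiently small. -/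
open MeasureTheory Real

private lemma exp_aux {x : ℝ} (hx0 : 0 ≤ x) (hx1 : x ≤ 1) : Real.exp x - 1 ≤ 3 * x := by
  have hexp3 : Real.exp x ≤ 3 :=
    le_trans (Real.exp_le_exp.mpr hx1) (le_trans Real.exp_one_lt_d9.le (by norm_num))
  have hA : 1 - x ≤ Real.exp (-x) := by linarith [Real.add_one_le_exp (-x)]
  have hprod : Real.exp x * Real.exp (-x) = 1 := by rw [← Real.exp_add]; simp
  nlinarith [Real.exp_pos x, mul_le_mul_of_nonneg_left hA (Real.exp_pos x).le,
    mul_le_mul_of_nonneg_left hexp3 hx0]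

/-- Ratio of normalizing constants of the two Gibbs measures: `Z/Ẑ = 1 + O(ε²/η)`. -/
theorem stmt8 {d : ℕ} (O : Set (EuclideanSpace ℝ (Fin d)))
    (J : EuclideanSpace ℝ (Fin d) → ℝ) (MJ : ℝ) (hJb : ∀ x, |J x| ≤ MJ)
    (c Sig : ℝ) (hc : 0 < c) (hSig : 0 < Sig)
    (tJ : ℝ → EuclideanSpace ℝ (Fin d) → ℝ) (tSig : ℝ → ℝ)
    (htJ : ∀ ε > (0:ℝ), ∀ x, |tJ ε x| ≤ c * ε ^ 2)
    (htSig : ∀ ε > (0:ℝ), |tSig ε| ≤ c * ε ^ 2)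
    (hint : ∀ ε > (0:ℝ), ∀ η > (0:ℝ),
      IntegrableOn (fun x => Real.exp (-(2 / (η * Sig)) * J x)) O volume ∧
      IntegrableOn (fun x => Real.exp (-(2 / (η * (Sig + tSig ε))) * (J x + tJ ε x))) O volume)
    (hZpos : ∀ ε > (0:ℝ), ∀ η > (0:ℝ),
      (0 < ∫ y in O, Real.exp (-(2 / (η * Sig)) * J y)) ∧
      (0 < ∫ y in O, Real.exp (-(2 / (η * (Sig + tSig ε))) * (J y + tJ ε y)))) :
    ∃ C > (0:ℝ), ∃ δ > (0:ℝ), ∀ ε > (0:ℝ), ∀ η > (0:ℝ),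
      ε ^ 2 ≤ Sig / (2 * c) → ε ^ 2 / η ≤ δ →
      |(∫ y in O, Real.exp (-(2 / (η * Sig)) * J y)) /
          (∫ y in O, Real.exp (-(2 / (η * (Sig + tSig ε))) * (J y + tJ ε y))) - 1|
        ≤ C * (ε ^ 2 / η) := by
  have hMJ : 0 ≤ MJ := le_trans (abs_nonneg _) (hJb 0)
  set K : ℝ := 4 * c * (MJ + Sig) / Sig ^ 2 with hKdef
  have hK0 : 0 < K := by positivity
  refine ⟨3 * K, by positivity, 1 / K, by positivity, ?_⟩
  intro ε hε η hη hε2 hδ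
  set t : ℝ := ε ^ 2 / η with htdef
  have ht0 : 0 < t := by positivity
  have hKt1 : K * t ≤ 1 := by
    have h1 : K * t ≤ K * (1 / K) := mul_le_mul_of_nonneg_left hδ hK0.le
    have h2 : K * (1 / K) = 1 := by field_simp
    linarith
  obtain ⟨hI1, hI2⟩ := hint ε hε η hη
  obtain ⟨hZ1, hZ2⟩ := hZpos ε hε η hη
  set Z := ∫ y in O, Real.exp (-(2 / (η * Sig)) * J y) with hZdef
  set Z' := ∫ y in O, Real.exp (-(2 / (η * (Sig + tSig ε))) * (J y + tJ ε y)) with hZ'def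
  have hSig2 : Sig / 2 ≤ Sig + tSig ε := by
    have h2 := (abs_le.mp (htSig ε hε)).1
    have hce : c * ε ^ 2 ≤ Sig / 2 := by
      rw [le_div_iff₀ (by positivity : (0:ℝ) < 2 * c)] at hε2
      nlinarith
    linarith
  have hS'pos : 0 < Sig + tSig ε := lt_of_lt_of_le (by positivity) hSig2
  -- pointwise exponent bound
  have key : ∀ x, |(-(2 / (η * Sig)) * J x) - (-(2 / (η * (Sig + tSig ε))) * (J x + tJ ε x))|
      ≤ K * t := by
    intro x
    have h1 : |tJ ε x| ≤ c * ε ^ 2 := htJ ε hε x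
    have h2 : |tSig ε| ≤ c * ε ^ 2 := htSig ε hε
    have hJx := hJb x
    have e1 : (-(2 / (η * Sig)) * J x) - (-(2 / (η * (Sig + tSig ε))) * (J x + tJ ε x))
        = (2 / (η * (Sig + tSig ε)) - 2 / (η * Sig)) * J x
          + (2 / (η * (Sig + tSig ε))) * tJ ε x := by ring
    rw [e1]
    have hβ' : 2 / (η * (Sig + tSig ε)) ≤ 4 / (η * Sig) := by
      rw [div_le_div_iff₀ (by positivity) (by positivity)]
      nlinarith
    have hβ'0 : 0 < 2 / (η * (Sig + tSig ε)) := by positivity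
    have hdiffeq : 2 / (η * (Sig + tSig ε)) - 2 / (η * Sig)
        = -2 * tSig ε / (η * Sig * (Sig + tSig ε)) := by
      field_simp
      ring
    have hdiff : |2 / (η * (Sig + tSig ε)) - 2 / (η * Sig)| ≤ 4 * c * ε ^ 2 / (η * Sig ^ 2) := by
      rw [hdiffeq, abs_div, abs_of_pos (show (0:ℝ) < η * Sig * (Sig + tSig ε) by positivity)]
      rw [div_le_div_iff₀ (by positivity) (by positivity)]
      have : |-2 * tSig ε| = 2 * |tSig ε| := by
        rw [abs_mul]; norm_num
      rw [this]
      have hA : 2 * η * Sig ^ 2 * |tSig ε| ≤ 2 * η * Sig ^ 2 * (c * ε ^ 2) :=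
        mul_le_mul_of_nonneg_left h2 (by positivity)
      have hB : 4 * c * ε ^ 2 * η * Sig * (Sig / 2) ≤ 4 * c * ε ^ 2 * η * Sig * (Sig + tSig ε) :=
        mul_le_mul_of_nonneg_left hSig2 (by positivity)
      nlinarith
    calc |(2 / (η * (Sig + tSig ε)) - 2 / (η * Sig)) * J x
          + (2 / (η * (Sig + tSig ε))) * tJ ε x|
        ≤ |2 / (η * (Sig + tSig ε)) - 2 / (η * Sig)| * |J x|
          + (2 / (η * (Sig + tSig ε))) * |tJ ε x| := by
          refine le_trans (abs_add_le _ _) ?_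
          rw [abs_mul, abs_mul, abs_of_pos hβ'0]
      _ ≤ 4 * c * ε ^ 2 / (η * Sig ^ 2) * MJ + 4 / (η * Sig) * (c * ε ^ 2) := by
          gcongr
      _ = K * t := by
          rw [hKdef, htdef]
          field_simp
  -- integral inequalities
  have hub : Z ≤ Real.exp (K * t) * Z' := by
    have hmono : ∀ x, Real.exp (-(2 / (η * Sig)) * J x)
        ≤ Real.exp (K * t) * Real.exp (-(2 / (η * (Sig + tSig ε))) * (J x + tJ ε x)) := by
      intro x
      rw [← Real.exp_add]
      apply Real.exp_le_exp.mpr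
      have := (abs_le.mp (key x)).2
      linarith
    calc Z ≤ ∫ y in O, Real.exp (K * t) *
            Real.exp (-(2 / (η * (Sig + tSig ε))) * (J y + tJ ε y)) := by
          exact setIntegral_mono hI1 (hI2.const_mul _) hmono
      _ = Real.exp (K * t) * Z' := by rw [integral_const_mul]
  have hlb : Real.exp (-(K * t)) * Z' ≤ Z := by
    have hmono : ∀ x, Real.exp (-(K * t)) *
        Real.exp (-(2 / (η * (Sig + tSig ε))) * (J x + tJ ε x))
        ≤ Real.exp (-(2 / (η * Sig)) * J x) := by
      intro x
      rw [← Real.exp_add]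
      apply Real.exp_le_exp.mpr
      have := (abs_le.mp (key x)).1
      linarith
    calc Real.exp (-(K * t)) * Z'
        = ∫ y in O, Real.exp (-(K * t)) *
            Real.exp (-(2 / (η * (Sig + tSig ε))) * (J y + tJ ε y)) := by
          rw [integral_const_mul]
      _ ≤ Z := setIntegral_mono (hI2.const_mul _) hI1 hmono
  -- ratio bounds
  have hr1 : Z / Z' ≤ Real.exp (K * t) := by
    rw [div_le_iff₀ hZ2]; linarith
  have hr2 : Real.exp (-(K * t)) ≤ Z / Z' := by
    rw [le_div_iff₀ hZ2]; linarith
  clear_value t Z Z'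
  have hKt0 : 0 ≤ K * t := (mul_pos hK0 ht0).le
  have hup : Real.exp (K * t) - 1 ≤ 3 * (K * t) := exp_aux hKt0 hKt1
  have hdn : 1 - K * t ≤ Real.exp (-(K * t)) := by
    linarith [Real.add_one_le_exp (-(K * t))]
  rw [abs_le]
  constructor
  · linarith
  · linarith
end

section
/- With a single sample $j \sim P(i,\cdot)$ (Sample-cloning: set $j' = j$ in the estimator above), the expected update $\mathbb{E}[G]$ equals the gradient of the biased objective $\tilde{J}(v) = \tfrac{1}{2}\sum_i \mu_i \sum_j P(i,j)(r_i + \gamma v_j - v_i)^2$, which differs from $\nabla_v J$ by the gradient of the conditional variance term: $\tilde{J}(v) - J(v) = \tfrac{\gamma^2}{2}\sum_i \mu_i \mathrm{Var}_{j\sim P(i,\cdot)}[v_j]$. In particular, Sample-cloning minimizes $J(v) + \tfrac{\gamma^2}{2}\mathbb{E}_{i\sim\mu}\mathrm{Var}_{j\sim P(i,\cdot)}[v_j]$ rather than $J$. -/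
/-!
The single-sample objective is a weighted least-squares function
`½ ∑_(i,j) μ_i P(i,j) (r_i + ⟪γ e_j - e_i, w⟫)²`, whose gradient is the weighted sum of residuals
times the directions `γ e_j - e_i`. Its gap to `J` is, row by row, `E[X²] - (E X)² = Var X` for
`X = (r_i - v_i) + γ v_j` with `j ~ P(i, ·)`; the shift `r_i - v_i` does not change the variance and
the factor `γ` scales it by `γ²`.
-/

open Finset

theorem hasGradientAt_of_hasFDerivAt_inner {F : Type*} [NormedAddCommGroup F]
    [InnerProductSpace ℝ F] [CompleteSpace F] {f : F → ℝ} {L : F →L[ℝ] ℝ} {g x : F}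
    (hf : HasFDerivAt f L x) (hL : ∀ y, L y = inner ℝ g y) : HasGradientAt f g x :=
  hasGradientAt_iff_hasFDerivAt.2 <| hf.congr_fderiv <| ContinuousLinearMap.ext fun y => by
    simp [hL]

theorem hasGradientAt_half_sum_mul_sq_affine {F κ : Type*} [NormedAddCommGroup F]
    [InnerProductSpace ℝ F] [CompleteSpace F] (s : Finset κ) (c a : κ → ℝ) (u : κ → F) (v : F) :
    HasGradientAt (fun w => 1 / 2 * ∑ k ∈ s, c k * (a k + inner ℝ (u k) w) ^ 2)
      (∑ k ∈ s, (c k * (a k + inner ℝ (u k) v)) • u k) v := by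
  have hterm : ∀ k, HasFDerivAt (fun w => c k * (a k + inner ℝ (u k) w) ^ 2)
      ((2 * (c k * (a k + inner ℝ (u k) v))) • innerSL ℝ (u k)) v := fun k =>
    ((((innerSL ℝ (u k)).hasFDerivAt.const_add (a k)).pow 2).const_mul (c k)).congr_fderiv <| by
      ext
      simp only [coe_innerSL_apply, Nat.add_one_sub_one, pow_one, smul_add, nsmul_eq_mul,
        Nat.cast_ofNat, smul_apply, smul_eq_mul]
      ring
  refine hasGradientAt_of_hasFDerivAt_inner
    ((HasFDerivAt.fun_sum fun k _ => hterm k).const_mul _) fun y => ?_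
  simp only [FunLike.coe_smul, FunLike.coe_sum, Pi.smul_apply, Finset.sum_apply,
    innerSL_apply_apply, smul_eq_mul, sum_inner, real_inner_smul_left, mul_sum]
  exact sum_congr rfl fun k _ => by ring

theorem inner_smul_single_sub_single {ι : Type*} [Fintype ι] [DecidableEq ι] (γ : ℝ) (i j : ι)
    (w : EuclideanSpace ℝ ι) :
    inner ℝ (γ • EuclideanSpace.single j (1 : ℝ) - EuclideanSpace.single i 1) w = γ * w j - w i := by
  simp [inner_sub_left, real_inner_smul_left, EuclideanSpace.inner_single_left]

theorem hasGradientAt_sampleCloning_objective {ι : Type*} [Fintype ι] [DecidableEq ι]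
    (P : Matrix ι ι ℝ) (γ : ℝ) (μ r : ι → ℝ) (v : EuclideanSpace ℝ ι) :
    HasGradientAt
      (fun w : EuclideanSpace ℝ ι =>
        (1:ℝ) / 2 * ∑ i, μ i * ∑ j, P i j * (r i + γ * w j - w i) ^ 2)
      ((WithLp.equiv 2 (ι → ℝ)).symm fun l =>
        ∑ i, ∑ j, μ i * P i j *
          ((if l = i then -(r i + γ * v j - v i) else 0)
            + (if l = j then γ * (r i + γ * v j - v i) else 0))) v := by
  have h := hasGradientAt_half_sum_mul_sq_affine univ (fun p : ι × ι => μ p.1 * P p.1 p.2)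
    (fun p => r p.1) (fun p => γ • EuclideanSpace.single p.2 (1 : ℝ) - EuclideanSpace.single p.1 1) v
  simp only [inner_smul_single_sub_single, ← add_sub_assoc, ← univ_product_univ, sum_product]
    at h
  convert h using 1
  · simp only [mul_sum, mul_assoc]
  · ext l
    simp only [neg_sub, WithLp.equiv_symm_apply, WithLp.ofLp_sum, WithLp.ofLp_smul, WithLp.ofLp_sub,
      PiLp.ofLp_single, Finset.sum_apply, Pi.smul_apply, Pi.sub_apply, smul_eq_mul]
    refine sum_congr rfl fun i _ => sum_congr rfl fun j _ => ?_
    simp only [Pi.single_apply]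
    split_ifs <;> ring

theorem sum_mul_add_mul_sq_sub_sq {ι : Type*} [Fintype ι] (p x : ι → ℝ) (hp : ∑ j, p j = 1)
    (a b : ℝ) :
    ∑ j, p j * (a + b * x j) ^ 2 - (a + b * ∑ j, p j * x j) ^ 2
      = b ^ 2 * (∑ j, p j * x j ^ 2 - (∑ j, p j * x j) ^ 2) := by
  have hexpand : ∑ j, p j * (a + b * x j) ^ 2
      = a ^ 2 * ∑ j, p j + 2 * a * b * ∑ j, p j * x j + b ^ 2 * ∑ j, p j * x j ^ 2 := by
    simp only [mul_sum, ← sum_add_distrib]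
    exact sum_congr rfl fun j _ => by ring
  rw [hexpand, hp]
  ring

theorem sampleCloning_objective_sub_objective {ι : Type*} [Fintype ι] (P : Matrix ι ι ℝ)
    (hP1 : ∀ i, ∑ j, P i j = 1) (γ : ℝ) (μ r v : ι → ℝ) :
    ((1:ℝ) / 2 * ∑ i, μ i * ∑ j, P i j * (r i + γ * v j - v i) ^ 2)
      - ((1:ℝ) / 2 * ∑ i, μ i * (r i + γ * (∑ j, P i j * v j) - v i) ^ 2)
    = γ ^ 2 / 2 * ∑ i, μ i * ((∑ j, P i j * (v j) ^ 2) - (∑ j, P i j * v j) ^ 2) := by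
  have hrow : ∀ i, ∑ j, P i j * (r i + γ * v j - v i) ^ 2
      - (r i + γ * (∑ j, P i j * v j) - v i) ^ 2
      = γ ^ 2 * (∑ j, P i j * v j ^ 2 - (∑ j, P i j * v j) ^ 2) := fun i => by
    simpa only [add_sub_right_comm] using sum_mul_add_mul_sq_sub_sq (P i) v (hP1 i) (r i - v i) γ
  rw [mul_sum, mul_sum, mul_sum, ← sum_sub_distrib]
  exact sum_congr rfl fun i _ => by linear_combination (μ i / 2) * hrow i

theorem stmt16_general {n : ℕ} (P : Matrix (Fin n) (Fin n) ℝ)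
    (hP1 : ∀ i, ∑ j, P i j = 1)
    (γ : ℝ)
    (μ : Fin n → ℝ) (r : Fin n → ℝ) :
    (∀ v : EuclideanSpace ℝ (Fin n),
      HasGradientAt
        (fun w : EuclideanSpace ℝ (Fin n) =>
          (1:ℝ) / 2 * ∑ i, μ i * ∑ j, P i j * (r i + γ * w j - w i) ^ 2)
        ((WithLp.equiv 2 (Fin n → ℝ)).symm fun l =>
          ∑ i, ∑ j, μ i * P i j *
            ((if l = i then -(r i + γ * v j - v i) else 0)
              + (if l = j then γ * (r i + γ * v j - v i) else 0))) v) ∧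
    ∀ v : Fin n → ℝ,
      ((1:ℝ) / 2 * ∑ i, μ i * ∑ j, P i j * (r i + γ * v j - v i) ^ 2)
        - ((1:ℝ) / 2 * ∑ i, μ i * (r i + γ * (∑ j, P i j * v j) - v i) ^ 2)
      = γ ^ 2 / 2 * ∑ i, μ i *
          ((∑ j, P i j * (v j) ^ 2) - (∑ j, P i j * v j) ^ 2) :=
  ⟨hasGradientAt_sampleCloning_objective P γ μ r,
    sampleCloning_objective_sub_objective P hP1 γ μ r⟩

/-- Sample-cloning bias: with a single sample (`j' = j`) the expected update is the
gradient of the biased objective `J̃(v) = ½∑_i μ_i ∑_j P(i,j)(r_i+γv_j−v_i)²`, which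
exceeds `J` by `γ²/2` times the mean conditional variance of `v`. -/
theorem stmt16 {n : ℕ} (P : Matrix (Fin n) (Fin n) ℝ)
    (hP0 : ∀ i j, 0 ≤ P i j) (hP1 : ∀ i, ∑ j, P i j = 1)
    (γ : ℝ) (hγ : γ ∈ Set.Ioo (0:ℝ) 1)
    (μ : Fin n → ℝ) (hμ : ∀ i, 0 < μ i) (r : Fin n → ℝ) :
    (∀ v : EuclideanSpace ℝ (Fin n),
      HasGradientAt
        (fun w : EuclideanSpace ℝ (Fin n) =>
          (1:ℝ) / 2 * ∑ i, μ i * ∑ j, P i j * (r i + γ * w j - w i) ^ 2)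
        ((WithLp.equiv 2 (Fin n → ℝ)).symm fun l =>
          ∑ i, ∑ j, μ i * P i j *
            ((if l = i then -(r i + γ * v j - v i) else 0)
              + (if l = j then γ * (r i + γ * v j - v i) else 0))) v) ∧
    ∀ v : Fin n → ℝ,
      ((1:ℝ) / 2 * ∑ i, μ i * ∑ j, P i j * (r i + γ * v j - v i) ^ 2)
        - ((1:ℝ) / 2 * ∑ i, μ i * (r i + γ * (∑ j, P i j * v j) - v i) ^ 2)
      = γ ^ 2 / 2 * ∑ i, μ i *
          ((∑ j, P i j * (v j) ^ 2) - (∑ j, P i j * v j) ^ 2) :=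
  stmt16_general P hP1 γ μ r
end
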